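/- Invertibility of the θ-Jacobian of the estimating function: Let K ≥ 2, let ρ be a weight system on {1,…,K} whose comparison graph is connected, and let θ ∈ ℝ^K. Then the (K−1)×(K−1) matrix M indexed by k,l ∈ {2,…,K}, with diagonal entries M_{kk} = Σ_{l∈{1,…,K}, l≠k} ρ_{kl} σ(θ_k−θ_l)(1−σ(θ_k−θ_l)) and off-diagonal entries M_{kl} = −ρ_{kl} σ(θ_k−θ_l)(1−σ(θ_k−θ_l)), is symmetric positive definite; in particular it is invertible. -/

import Mathlib

/-!
The matrix is the Laplacian `L = diag(∑ₗ w_kl) − (w_kl)` of the comparison graph with weights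
`w_kl = ρ_kl σ(θ_k−θ_l)(1−σ(θ_k−θ_l))`, grounded at the first vertex (its row and column
deleted). As `σ(−t)(1−σ(−t)) = σ(t)(1−σ(t)) > 0`, these weights are symmetric, nonnegative and
positive exactly on the edges. The quadratic form of `L` is `½ ∑ w_kl (y_k − y_l)²`: it is
nonnegative and vanishes only if `y` is constant along edges, hence on the connected graph. So the
form of the grounded matrix at `x`, which is that of `L` at `x` extended by `0` at the first
vertex, vanishes only for `x = 0`.
-/

open scoped BigOperators
open Matrix

/-- The logistic sigmoid function `σ(t) = 1/(1+exp(−t))`. -/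
noncomputable def sigmoid (t : ℝ) : ℝ := 1 / (1 + Real.exp (-t))

lemma sigmoid_eq_real_sigmoid : sigmoid = Real.sigmoid :=
  funext fun _ ↦ one_div _

lemma sigmoid_mul_one_sub_sigmoid_pos (t : ℝ) : 0 < sigmoid t * (1 - sigmoid t) := by
  rw [sigmoid_eq_real_sigmoid]
  exact mul_pos (Real.sigmoid_pos t) (sub_pos.mpr (Real.sigmoid_lt_one t))

lemma sigmoid_mul_one_sub_sigmoid_neg (t : ℝ) :
    sigmoid (-t) * (1 - sigmoid (-t)) = sigmoid t * (1 - sigmoid t) := by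
  rw [sigmoid_eq_real_sigmoid, Real.sigmoid_neg]; ring

lemma SimpleGraph.Reachable.eq_of_forall_adj {V α : Type*} {G : SimpleGraph V} {f : V → α}
    (hf : ∀ u v, G.Adj u v → f u = f v) {u v : V} (huv : G.Reachable u v) : f u = f v := by
  obtain ⟨p⟩ := huv
  induction p with
  | nil => rfl
  | cons hadj _ ih => exact (hf _ _ hadj).trans ih

section ExtendByZero

variable {ι V R : Type*} [Fintype ι] [Fintype V] [CommSemiring R] {e : ι → V}

lemma Function.Injective.extend_zero_dotProduct (he : e.Injective) (x : ι → R) (g : V → R) :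
    Function.extend e x 0 ⬝ᵥ g = x ⬝ᵥ (g ∘ e) := by
  classical
  have houtside : ∀ v ∉ Finset.univ.map ⟨e, he⟩, Function.extend e x 0 v * g v = 0 := by
    intro v hv
    rw [Function.extend_apply' _ _ _ (by simpa using hv), Pi.zero_apply, zero_mul]
  rw [dotProduct, ← Finset.sum_subset (Finset.subset_univ _) fun v _ ↦ houtside v,
    Finset.sum_map]
  simp only [Function.Embedding.coeFn_mk, he.extend_apply, dotProduct, Function.comp_apply]

lemma Function.Injective.dotProduct_submatrix_mulVec (he : e.Injective) (A : Matrix V V R)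
    (x : ι → R) :
    x ⬝ᵥ (A.submatrix e e *ᵥ x) =
      Function.extend e x 0 ⬝ᵥ (A *ᵥ Function.extend e x 0) := by
  rw [he.extend_zero_dotProduct]
  congr 1
  ext i
  simp only [mulVec, Function.comp_apply, dotProduct_comm _ (Function.extend e x 0),
    he.extend_zero_dotProduct]
  exact dotProduct_comm _ _

end ExtendByZero

lemma weight_mul_sq_sub_nonneg {V : Type*} {w : V → V → ℝ}
    (hnn : ∀ k l, k ≠ l → 0 ≤ w k l) (x : V → ℝ) (k l : V) :
    0 ≤ w k l * (x k - x l) ^ 2 := by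
  rcases eq_or_ne k l with rfl | hkl
  · simp
  · exact mul_nonneg (hnn k l hkl) (sq_nonneg _)

section WeightedLaplacian

variable {V : Type*} [Fintype V] [DecidableEq V] (w : V → V → ℝ)

/-- The diagonal values `w k k` cancel, so only the off-diagonal weights matter. -/
noncomputable def weightedLaplacian : Matrix V V ℝ :=
  diagonal (fun k ↦ ∑ l, w k l) - of w

lemma weightedLaplacian_apply_self (k : V) :
    weightedLaplacian w k k = ∑ l ∈ Finset.univ.filter (fun l ↦ l ≠ k), w k l := by
  rw [Finset.filter_ne', Finset.sum_erase_eq_sub (Finset.mem_univ k)]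
  simp [weightedLaplacian]

lemma weightedLaplacian_apply_of_ne {k l : V} (h : k ≠ l) :
    weightedLaplacian w k l = -w k l := by
  simp [weightedLaplacian, h]

variable {w}

lemma weightedLaplacian_isHermitian (hw : ∀ k l, w k l = w l k) :
    (weightedLaplacian w).IsHermitian :=
  (isHermitian_diagonal _).sub (by ext k l; exact hw l k)

lemma dotProduct_weightedLaplacian_mulVec (hw : ∀ k l, w k l = w l k) (x : V → ℝ) :
    x ⬝ᵥ (weightedLaplacian w *ᵥ x) = (∑ k, ∑ l, w k l * (x k - x l) ^ 2) / 2 := by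
  have hswap : ∑ k, ∑ l, w k l * x l ^ 2 = ∑ k, ∑ l, w k l * x k ^ 2 := by
    rw [Finset.sum_comm]; simp only [hw]
  have hexpand : ∑ k, ∑ l, w k l * (x k - x l) ^ 2 =
      ∑ k, ∑ l, w k l * x k ^ 2 + ∑ k, ∑ l, w k l * x l ^ 2
        - 2 * ∑ k, ∑ l, w k l * x k * x l := by
    simp only [Finset.mul_sum, ← Finset.sum_add_distrib, ← Finset.sum_sub_distrib]
    exact Finset.sum_congr rfl fun k _ ↦ Finset.sum_congr rfl fun l _ ↦ by ring
  rw [hexpand, hswap, show ∀ a b : ℝ, (a + a - 2 * b) / 2 = a - b by intros; ring,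
    weightedLaplacian, sub_mulVec, dotProduct_sub, funext (mulVec_diagonal _ x)]
  simp only [dotProduct, mulVec, of_apply, Finset.mul_sum, Finset.sum_mul]
  congr! 3 <;> ring

lemma dotProduct_weightedLaplacian_mulVec_nonneg (hw : ∀ k l, w k l = w l k)
    (hnn : ∀ k l, k ≠ l → 0 ≤ w k l) (x : V → ℝ) :
    0 ≤ x ⬝ᵥ (weightedLaplacian w *ᵥ x) := by
  rw [dotProduct_weightedLaplacian_mulVec hw]
  exact div_nonneg (Finset.sum_nonneg fun k _ ↦ Finset.sum_nonneg fun l _ ↦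
    weight_mul_sq_sub_nonneg hnn x k l) zero_le_two

lemma eq_of_dotProduct_weightedLaplacian_mulVec_eq_zero (hw : ∀ k l, w k l = w l k)
    (hnn : ∀ k l, k ≠ l → 0 ≤ w k l) {x : V → ℝ} (hx : x ⬝ᵥ (weightedLaplacian w *ᵥ x) = 0)
    {k l : V} (hkl : 0 < w k l) : x k = x l := by
  have hsum : ∑ k, ∑ l, w k l * (x k - x l) ^ 2 = 0 := by
    rw [dotProduct_weightedLaplacian_mulVec hw] at hx
    linarith
  have hrow := (Finset.sum_eq_zero_iff_of_nonneg fun k _ ↦ Finset.sum_nonneg fun l _ ↦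
    weight_mul_sq_sub_nonneg hnn x k l).1 hsum k (Finset.mem_univ k)
  have hterm := (Finset.sum_eq_zero_iff_of_nonneg fun l _ ↦
    weight_mul_sq_sub_nonneg hnn x k l).1 hrow l (Finset.mem_univ l)
  rw [mul_eq_zero, or_iff_right hkl.ne', sq_eq_zero_iff, sub_eq_zero] at hterm
  exact hterm

theorem posDef_submatrix_weightedLaplacian {ι : Type*} [Fintype ι] (hw : ∀ k l, w k l = w l k)
    (hnn : ∀ k l, k ≠ l → 0 ≤ w k l)
    (hconn : (SimpleGraph.fromRel fun k l ↦ 0 < w k l).Connected)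
    {e : ι → V} (he : e.Injective) {v₀ : V} (hv₀ : ∀ i, e i ≠ v₀) :
    ((weightedLaplacian w).submatrix e e).PosDef := by
  refine .of_dotProduct_mulVec_pos ((weightedLaplacian_isHermitian hw).submatrix e)
    fun x hx ↦ ?_
  rw [star_trivial, he.dotProduct_submatrix_mulVec]
  set y := Function.extend e x 0
  refine (dotProduct_weightedLaplacian_mulVec_nonneg hw hnn y).lt_of_ne fun hzero ↦ hx ?_
  have hadj : ∀ k l, (SimpleGraph.fromRel fun k l ↦ 0 < w k l).Adj k l → y k = y l := by
    rintro k l ⟨-, hkl | hlk⟩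
    · exact eq_of_dotProduct_weightedLaplacian_mulVec_eq_zero hw hnn hzero.symm hkl
    · exact (eq_of_dotProduct_weightedLaplacian_mulVec_eq_zero hw hnn hzero.symm hlk).symm
  funext i
  calc x i = y (e i) := (he.extend_apply x 0 i).symm
    _ = y v₀ := (hconn.preconnected (e i) v₀).eq_of_forall_adj hadj
    _ = 0 := Function.extend_apply' _ _ _ fun ⟨j, hj⟩ ↦ hv₀ j hj

end WeightedLaplacian

/-- Invertibility of the `θ`-Jacobian of the estimating function: if the
comparison graph of the weight system `ρ` is connected, then the matrix with
diagonal entries `∑_{l≠k} ρ_{kl} σ'(θ_k−θ_l)` and off-diagonal entries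
`−ρ_{kl} σ'(θ_k−θ_l)` (indexed by `{2,…,K}`) is symmetric positive definite;
in particular it is invertible. -/
theorem theta_jacobian_posDef
    (K : ℕ) (hK : 2 ≤ K)
    (ρ : Fin K → Fin K → ℝ)
    (hρnn : ∀ k l : Fin K, k ≠ l → 0 ≤ ρ k l)
    (hρsym : ∀ k l : Fin K, k ≠ l → ρ k l = ρ l k)
    (hconn : (SimpleGraph.fromRel (fun k l : Fin K => 0 < ρ k l)).Connected)
    (θ : Fin K → ℝ)
    (M : Matrix (Fin (K - 1)) (Fin (K - 1)) ℝ)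
    (hMdiag : ∀ i : Fin (K - 1),
      M i i = ∑ l ∈ Finset.univ.filter
          (fun l => l ≠ (⟨i.1 + 1, by have := i.isLt; omega⟩ : Fin K)),
        ρ ⟨i.1 + 1, by have := i.isLt; omega⟩ l *
          (sigmoid (θ ⟨i.1 + 1, by have := i.isLt; omega⟩ - θ l) *
            (1 - sigmoid (θ ⟨i.1 + 1, by have := i.isLt; omega⟩ - θ l))))
    (hMoff : ∀ i j : Fin (K - 1), i ≠ j →
      M i j = -(ρ ⟨i.1 + 1, by have := i.isLt; omega⟩ ⟨j.1 + 1, by have := j.isLt; omega⟩ *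
        (sigmoid (θ ⟨i.1 + 1, by have := i.isLt; omega⟩ - θ ⟨j.1 + 1, by have := j.isLt; omega⟩) *
          (1 - sigmoid (θ ⟨i.1 + 1, by have := i.isLt; omega⟩ -
            θ ⟨j.1 + 1, by have := j.isLt; omega⟩))))) :
    M.PosDef ∧ IsUnit M.det := by
  let w : Fin K → Fin K → ℝ := fun k l ↦
    ρ k l * (sigmoid (θ k - θ l) * (1 - sigmoid (θ k - θ l)))
  have hw : ∀ k l, w k l = w l k := by
    intro k l
    rcases eq_or_ne k l with rfl | hkl
    · rfl
    · simp only [w]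
      rw [hρsym k l hkl, ← neg_sub (θ k) (θ l), sigmoid_mul_one_sub_sigmoid_neg]
  have hnn : ∀ k l, k ≠ l → 0 ≤ w k l := fun k l hkl ↦
    mul_nonneg (hρnn k l hkl) (sigmoid_mul_one_sub_sigmoid_pos _).le
  have hgraph : (fun k l ↦ 0 < w k l) = fun k l ↦ 0 < ρ k l := by
    funext k l
    exact propext (mul_pos_iff_of_pos_right (sigmoid_mul_one_sub_sigmoid_pos _))
  let e : Fin (K - 1) → Fin K := fun i ↦ ⟨i.1 + 1, by omega⟩
  have he : e.Injective := fun i j hij ↦ by simpa [e, Fin.ext_iff] using hij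
  have hM : M = (weightedLaplacian w).submatrix e e := by
    ext i j
    rcases eq_or_ne i j with rfl | hij
    · rw [hMdiag, submatrix_apply, weightedLaplacian_apply_self]
    · rw [hMoff i j hij, submatrix_apply, weightedLaplacian_apply_of_ne w (he.ne hij)]
  have hpd : M.PosDef := hM ▸ posDef_submatrix_weightedLaplacian hw hnn (hgraph ▸ hconn) he
    (v₀ := ⟨0, by omega⟩) fun i hi ↦ by simp [e, Fin.ext_iff] at hi
  exact ⟨hpd, hpd.det_pos.ne'.isUnit⟩
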